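/- Let G1 ∗_T G2 be a tree amalgamation of connected graphs whose identification sizes are bounded, i.e., there is N ∈ ℕ such that every vertex of G1 ∗_T G2 has identification size at most N. Then the canonical contraction map ψ: V(G1 + G2) → V(G1 ∗_T G2) is a quasi-isometry whose constants depend only on N. -/

import Mathlib

open SimpleGraph

universe u v

/-! ### Quasi-isometries -/

/-- `f` is a `(γ, c)`-quasi-isometry from `G` to `H`. -/
def IsQIWith {V : Type u} {W : Type v} (G : SimpleGraph V) (H : SimpleGraph W)
    (γ c : ℝ) (f : V → W) : Prop :=
  (∀ u v : V, γ⁻¹ * (G.dist u v : ℝ) - c ≤ (H.dist (f u) (f v) : ℝ) ∧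
      (H.dist (f u) (f v) : ℝ) ≤ γ * (G.dist u v : ℝ) + c) ∧
  ∀ w : W, ∃ x : V, (H.dist w (f x) : ℝ) ≤ c

/-- `G` and `H` are quasi-isometric. -/
def QuasiIsometric {V : Type u} {W : Type v} (G : SimpleGraph V) (H : SimpleGraph W) : Prop :=
  ∃ (γ c : ℝ) (f : V → W), 1 ≤ γ ∧ 0 ≤ c ∧ IsQIWith G H γ c f

/-- `H` embeds quasi-isometrically into `G`. -/
def QIEmbeds {V : Type u} {W : Type v} (H : SimpleGraph V) (G : SimpleGraph W) : Prop :=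
  ∃ (γ c : ℝ) (f : V → W), 1 ≤ γ ∧ 0 ≤ c ∧
    ∀ u v : V, γ⁻¹ * (H.dist u v : ℝ) - c ≤ (G.dist (f u) (f v) : ℝ) ∧
      (G.dist (f u) (f v) : ℝ) ≤ γ * (H.dist u v : ℝ) + c

/-! ### Basic graph properties -/

/-- Every vertex has finite degree. -/
def LocallyFiniteGraph {V : Type u} (G : SimpleGraph V) : Prop :=
  ∀ v : V, (G.neighborSet v).Finite

/-- The automorphism group of `G` has finitely many orbits on the vertex set. -/
def QuasiTransitive {V : Type u} (G : SimpleGraph V) : Prop :=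
  ∃ s : Set V, s.Finite ∧ ∀ v : V, ∃ u ∈ s, ∃ g : G ≃g G, g u = v

/-- The automorphism group of `G` acts transitively on the vertex set. -/
def VertexTransitive {V : Type u} (G : SimpleGraph V) : Prop :=
  ∀ u v : V, ∃ g : G ≃g G, g u = v

/-- `G` has exactly one end. -/
def OneEnded {V : Type u} (G : SimpleGraph V) : Prop :=
  Nonempty G.end ∧ Subsingleton G.end

/-- `G` and `H` have the same number of ends (in the sense `0, 1, 2, …, ∞`). -/
def SameNumberOfEnds {V : Type u} {W : Type v} (G : SimpleGraph V) (H : SimpleGraph W) : Prop :=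
  (Infinite G.end ∧ Infinite H.end) ∨
    (Finite G.end ∧ Finite H.end ∧ Nat.card G.end = Nat.card H.end)

/-- There is `n : ℕ` such that every two distinct ends of `G` can be separated by removing
at most `n` vertices. -/
def Accessible {V : Type u} (G : SimpleGraph V) : Prop :=
  ∃ n : ℕ, ∀ e e' : G.end, e ≠ e' →
    ∃ K : Finset V, K.card ≤ n ∧ e.val (Opposite.op K) ≠ e'.val (Opposite.op K)

/-- `T` is a tree all of whose vertices have degree `3`. -/
def CubicTree {W : Type u} (T : SimpleGraph W) : Prop :=
  T.IsTree ∧ ∀ v : W, (T.neighborSet v).ncard = 3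

/-! ### Tree amalgamations -/

/-- The bipartite graph on `VT1 ⊕ VT2` given by the relation `R`. -/
def bipGraph {VT1 VT2 : Type u} (R : VT1 → VT2 → Prop) : SimpleGraph (VT1 ⊕ VT2) :=
  SimpleGraph.fromRel fun x y =>
    match x, y with
    | Sum.inl a, Sum.inr b => R a b
    | _, _ => False

/-- All the data of a tree amalgamation `G1 ∗_T G2`: a semiregular tree (given by its
bipartition classes `VT1`, `VT2` and the adjacency relation `Tadj`), a labelling of the
edges of the tree by pairs of indices from `K1 × K2` such that the labels at each vertex of
`VTi` biject with `Ki` in the `i`-th coordinate, families of adhesion sets `S1`, `S2`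
(all of the same cardinality), and the gluing bijections `glue k l : S1 k → S2 l`. -/
structure TreeAmalgData {V1 V2 : Type u} (G1 : SimpleGraph V1) (G2 : SimpleGraph V2) :
    Type (u + 1) where
  VT1 : Type u
  VT2 : Type u
  K1 : Type u
  K2 : Type u
  Tadj : VT1 → VT2 → Prop
  isTree : (bipGraph Tadj).IsTree
  lab1 : ∀ a b, Tadj a b → K1
  lab2 : ∀ a b, Tadj a b → K2
  lab1_bij : ∀ a : VT1, Function.Bijective fun b : {b : VT2 // Tadj a b} => lab1 a b.1 b.2
  lab2_bij : ∀ b : VT2, Function.Bijective fun a : {a : VT1 // Tadj a b} => lab2 a.1 b a.2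
  S1 : K1 → Set V1
  S2 : K2 → Set V2
  S1_nonempty : ∀ k, (S1 k).Nonempty
  glue : K1 → K2 → V1 → V2
  glue_bij : ∀ k l, Set.BijOn (glue k l) (S1 k) (S2 l)

namespace TreeAmalgData

variable {V1 V2 : Type u} {G1 : SimpleGraph V1} {G2 : SimpleGraph V2}

/-- The vertex set of the graph `G1 + G2`. -/
abbrev PlusV (D : TreeAmalgData G1 G2) : Type u := (D.VT1 × V1) ⊕ (D.VT2 × V2)

/-- The relation describing the edges added between the copies `G1^u` and `G2^v`. -/
def cross (D : TreeAmalgData G1 G2) (p : D.VT1 × V1) (q : D.VT2 × V2) : Prop :=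
  ∃ h : D.Tadj p.1 q.1, p.2 ∈ D.S1 (D.lab1 p.1 q.1 h) ∧
    q.2 = D.glue (D.lab1 p.1 q.1 h) (D.lab2 p.1 q.1 h) p.2

def plusRel (D : TreeAmalgData G1 G2) : D.PlusV → D.PlusV → Prop
  | Sum.inl p, Sum.inl p' => p.1 = p'.1 ∧ G1.Adj p.2 p'.2
  | Sum.inr q, Sum.inr q' => q.1 = q'.1 ∧ G2.Adj q.2 q'.2
  | Sum.inl p, Sum.inr q => D.cross p q
  | Sum.inr _, Sum.inl _ => False

/-- The graph `G1 + G2`: disjoint copies of `G1` and `G2` along the tree, together with the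
added matching edges between adhesion sets. -/
def plusGraph (D : TreeAmalgData G1 G2) : SimpleGraph D.PlusV :=
  SimpleGraph.fromRel D.plusRel

/-- The relation identifying the endpoints of the added edges (which get contracted). -/
def idRel (D : TreeAmalgData G1 G2) : D.PlusV → D.PlusV → Prop :=
  fun x y => ∃ p q, x = Sum.inl p ∧ y = Sum.inr q ∧ D.cross p q

/-- Vertex set of the tree amalgamation `G1 ∗_T G2`. -/
abbrev AmalgV (D : TreeAmalgData G1 G2) : Type u := Quot D.idRel

/-- The canonical contraction map `ψ : V(G1 + G2) → V(G1 ∗_T G2)`. -/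
def toAmalg (D : TreeAmalgData G1 G2) : D.PlusV → D.AmalgV := Quot.mk _

/-- The tree amalgamation `G1 ∗_T G2`, obtained from `G1 + G2` by contracting all the
added edges. -/
def amalgGraph (D : TreeAmalgData G1 G2) : SimpleGraph D.AmalgV :=
  SimpleGraph.fromRel fun x y =>
    ∃ a b, x = D.toAmalg a ∧ y = D.toAmalg b ∧ D.plusGraph.Adj a b

/-- The tree vertex at which a vertex of `G1 + G2` lives. -/
def site (D : TreeAmalgData G1 G2) : D.PlusV → D.VT1 ⊕ D.VT2
  | Sum.inl p => Sum.inl p.1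
  | Sum.inr q => Sum.inr q.1

/-- The set of tree vertices hosting representatives of `x`; the identification size of `x`
is the number of its elements. -/
def support (D : TreeAmalgData G1 G2) (x : D.AmalgV) : Set (D.VT1 ⊕ D.VT2) :=
  {t | ∃ p, D.toAmalg p = x ∧ D.site p = t}

/-- Every vertex of `G1 ∗_T G2` has finite identification size. -/
def FiniteIdentification (D : TreeAmalgData G1 G2) : Prop :=
  ∀ x : D.AmalgV, (D.support x).Finite

/-- All adhesion sets are finite. -/
def FiniteAdhesion (D : TreeAmalgData G1 G2) : Prop :=
  (∀ k, (D.S1 k).Finite) ∧ ∀ l, (D.S2 l).Finite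

/-- The tree amalgamation is trivial: the contraction map restricts to a bijection on some
copy of `G1` or of `G2`. -/
def IsTrivial (D : TreeAmalgData G1 G2) : Prop :=
  (∃ a : D.VT1, Function.Bijective fun x : V1 => D.toAmalg (Sum.inl (a, x))) ∨
  ∃ b : D.VT2, Function.Bijective fun y : V2 => D.toAmalg (Sum.inr (b, y))

end TreeAmalgData

/-- Some group of automorphisms of `G` acts with finitely many orbits on the vertices of `G`
and with finitely many orbits on the family `S` of adhesion sets of `G`. -/
def GoodAction {V : Type u} (G : SimpleGraph V) {K : Type u} (S : K → Set V) : Prop :=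
  ∃ Γ : Subgroup (G ≃g G),
    (∃ s : Set V, s.Finite ∧ ∀ v : V, ∃ u ∈ s, ∃ g ∈ Γ, g u = v) ∧
    ∃ I : Set K, I.Finite ∧ ∀ k : K, ∃ k' ∈ I, ∃ g ∈ Γ, ⇑g '' S k' = S k

/-- A bundled graph. -/
structure BGraph : Type (u + 1) where
  V : Type u
  G : SimpleGraph V

/-- `Z` is (isomorphic to) a tree amalgamation of `X` and `Y` of finite adhesion and finite
identification. -/
def AmalgStep (X Y Z : BGraph.{u}) : Prop :=
  ∃ D : TreeAmalgData X.G Y.G,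
    D.FiniteAdhesion ∧ D.FiniteIdentification ∧ Nonempty (Z.G ≃g D.amalgGraph)

/-- `Z` is (isomorphic to) a tree amalgamation of `X` and `Y` of finite adhesion and finite
identification such that some group of automorphisms of each factor acts with finitely many
orbits on that factor and on the set of its adhesion sets. -/
def GoodAmalgStep (X Y Z : BGraph.{u}) : Prop :=
  ∃ D : TreeAmalgData X.G Y.G,
    D.FiniteAdhesion ∧ D.FiniteIdentification ∧
    GoodAction X.G D.S1 ∧ GoodAction Y.G D.S2 ∧ Nonempty (Z.G ≃g D.amalgGraph)

/-- `Z` is obtained from the list `l` of graphs by iterated tree amalgamations of finite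
adhesion and finite identification. -/
inductive IterAmalg : BGraph.{u} → List BGraph.{u} → Prop
  | single (X : BGraph) : IterAmalg X [X]
  | step {X Y Z : BGraph} {l1 l2 : List BGraph} :
      IterAmalg X l1 → IterAmalg Y l2 → AmalgStep X Y Z → IterAmalg Z (l1 ++ l2)

/-- `Z` is obtained from the list `l` of graphs by iterated tree amalgamations of finite
adhesion and finite identification with quasi-transitive actions on the factors and their
adhesion sets. -/
inductive GoodIterAmalg : BGraph.{u} → List BGraph.{u} → Prop
  | single (X : BGraph) : GoodIterAmalg X [X]
  | step {X Y Z : BGraph} {l1 l2 : List BGraph} :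
      GoodIterAmalg X l1 → GoodIterAmalg Y l2 → GoodAmalgStep X Y Z →
        GoodIterAmalg Z (l1 ++ l2)

/-- `l` is a factorisation of the graph `Gb`. -/
def IsFactorisation (Gb : BGraph.{u}) (l : List BGraph.{u}) : Prop :=
  (∀ X ∈ l, X.G.Connected ∧ LocallyFiniteGraph X.G ∧ QuasiTransitive X.G) ∧
    GoodIterAmalg Gb l

/-- A factorisation is terminal if every factor has at most one end. -/
def IsTerminal (l : List BGraph.{u}) : Prop := ∀ X ∈ l, Subsingleton X.G.end

/-!
Contracting an edge cannot increase distances, so `ψ` is `1`-Lipschitz. Conversely, the vertices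
of `G1 + G2` identified into one vertex `x` of `G1 ∗_T G2` are connected by added edges, and
sending a vertex to the tree vertex hosting its copy is a locally injective homomorphism from the
graph of added edges to `T`, because the gluing maps are bijections. Since `T` is a tree, it maps
paths to paths, so distinct vertices on a path of added edges live in distinct copies: the fibre
of `x` has diameter smaller than the identification size of `x`. Lifting each edge of a geodesic
of `G1 ∗_T G2` to an edge of `G1 + G2` and joining consecutive lifts inside fibres then gives
`d(u, v) ≤ (N + 1) · d(ψ u, ψ v) + N`.
-/

namespace SimpleGraph

variable {V : Type u} {W : Type v} {G : SimpleGraph V} {H : SimpleGraph W}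

theorem Walk.IsPath.map_of_isAcyclic (f : G →g H) (hH : H.IsAcyclic)
    (hf : ∀ {a b c : V}, G.Adj a b → G.Adj b c → f a = f c → a = c)
    {u v : V} {p : G.Walk u v} (hp : p.IsPath) : (p.map f).IsPath := by
  induction p with
  | nil => simp
  | @cons u b v h q ih =>
    rw [Walk.cons_isPath_iff] at hp
    rw [Walk.map_cons, Walk.cons_isPath_iff]
    refine ⟨ih hp.1, fun hmem => hp.2 ?_⟩
    -- `f u` is adjacent to the start of the path `q.map f`, so in a forest it can only be its
    -- second vertex.
    have hsnd : f u = f q.snd := by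
      rw [← Walk.getVert_map]
      exact hH.eq_snd_of_adj_start (ih hp.1) (f.map_adj h).symm hmem
    cases q with
    | nil => exact absurd hsnd (f.map_adj h).ne
    | cons h' q' =>
      rw [hf h h' (by simpa using hsnd)]
      simp

variable {f : V → W}

theorem Preconnected.of_reachable_fibers (hH : H.Preconnected)
    (hlift : ∀ x y, H.Adj x y → ∃ a b, f a = x ∧ f b = y ∧ G.Adj a b)
    (hfib : ∀ a b, f a = f b → G.Reachable a b) : G.Preconnected := by
  suffices ∀ {x y : W} (q : H.Walk x y) {u v : V}, f u = x → f v = y → G.Reachable u v from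
    fun u v => this (hH (f u) (f v)).some rfl rfl
  intro x y q
  induction q with
  | nil => exact fun hu hv => hfib _ _ (hu.trans hv.symm)
  | cons h q ih =>
    intro u v hu hv
    obtain ⟨a, b, ha, hb, hab⟩ := hlift _ _ h
    exact ((hfib u a (hu.trans ha.symm)).trans hab.reachable).trans (ih hb hv)

theorem Walk.exists_walk_map_length_le (hf : ∀ a b, G.Adj a b → f a = f b ∨ H.Adj (f a) (f b))
    {u v : V} (p : G.Walk u v) : ∃ q : H.Walk (f u) (f v), q.length ≤ p.length := by
  induction p with
  | nil => exact ⟨.nil, le_rfl⟩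
  | @cons a b c h p ih =>
    obtain ⟨q, hq⟩ := ih
    rcases hf a b h with heq | hadj
    · exact ⟨q.copy heq.symm rfl, by simp only [Walk.length_copy, Walk.length_cons]; omega⟩
    · exact ⟨.cons hadj q, by simp only [Walk.length_cons]; omega⟩

theorem Reachable.dist_map_le (hf : ∀ a b, G.Adj a b → f a = f b ∨ H.Adj (f a) (f b))
    {u v : V} (huv : G.Reachable u v) :
    H.Reachable (f u) (f v) ∧ H.dist (f u) (f v) ≤ G.dist u v := by
  obtain ⟨p, hp⟩ := huv.exists_walk_length_eq_dist
  obtain ⟨q, hq⟩ := p.exists_walk_map_length_le hf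
  exact ⟨q.reachable, (dist_le q).trans (hp ▸ hq)⟩

theorem Connected.dist_le_mul_walk_length_add (hG : G.Connected) {N : ℕ}
    (hlift : ∀ x y, H.Adj x y → ∃ a b, f a = x ∧ f b = y ∧ G.Adj a b)
    (hfib : ∀ a b, f a = f b → G.dist a b ≤ N) {x y : W} (q : H.Walk x y) {u v : V}
    (hu : f u = x) (hv : f v = y) : G.dist u v ≤ (N + 1) * q.length + N := by
  induction q generalizing u with
  | nil => simpa using hfib _ _ (hu.trans hv.symm)
  | @cons x z y h q ih =>
    obtain ⟨a, b, ha, hb, hab⟩ := hlift _ _ h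
    calc G.dist u v ≤ G.dist u a + G.dist a b + G.dist b v :=
          hG.dist_triangle.trans (by gcongr; exact hG.dist_triangle)
      _ ≤ N + 1 + ((N + 1) * q.length + N) := by
          gcongr
          · exact hfib u a (hu.trans ha.symm)
          · exact (dist_eq_one_iff_adj.mpr hab).le
          · exact ih hb hv
      _ = (N + 1) * (q.cons h).length + N := by simp only [Walk.length_cons]; ring

theorem Connected.isQIWith_of_contraction (hG : G.Connected) (N : ℕ)
    (hsurj : Function.Surjective f)
    (hf : ∀ a b, G.Adj a b → f a = f b ∨ H.Adj (f a) (f b))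
    (hlift : ∀ x y, H.Adj x y → ∃ a b, f a = x ∧ f b = y ∧ G.Adj a b)
    (hfib : ∀ a b, f a = f b → G.dist a b ≤ N) :
    IsQIWith G H (N + 1) N f := by
  refine ⟨fun u v => ?_, fun w => ?_⟩
  · obtain ⟨hreach, hle⟩ := (hG u v).dist_map_le hf
    obtain ⟨q, hq⟩ := hreach.exists_walk_length_eq_dist
    have hge := hG.dist_le_mul_walk_length_add hlift hfib q rfl rfl
    rw [hq] at hge
    have hle' : (H.dist (f u) (f v) : ℝ) ≤ G.dist u v := by exact_mod_cast hle
    have hge' : (G.dist u v : ℝ) ≤ (N + 1) * H.dist (f u) (f v) + N := by exact_mod_cast hge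
    have hN : (0 : ℝ) ≤ N := N.cast_nonneg
    constructor
    · rw [sub_le_iff_le_add, inv_mul_le_iff₀ (by positivity)]
      nlinarith
    · nlinarith [(G.dist u v).cast_nonneg (α := ℝ)]
  · obtain ⟨x, rfl⟩ := hsurj w
    exact ⟨x, by simp⟩

end SimpleGraph

theorem List.Nodup.length_le_ncard {α : Type u} {l : List α} {s : Set α} (hl : l.Nodup)
    (hsub : ∀ x ∈ l, x ∈ s) (hs : s.Finite) : l.length ≤ s.ncard := by
  classical
  rw [← List.toFinset_card_of_nodup hl, ← Set.ncard_coe_finset]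
  exact Set.ncard_le_ncard (fun x hx => hsub x (by simpa using hx)) hs

namespace TreeAmalgData

variable {V1 V2 : Type u} {G1 : SimpleGraph V1} {G2 : SimpleGraph V2} (D : TreeAmalgData G1 G2)

def copy1 (a : D.VT1) : G1 →g D.plusGraph where
  toFun x := Sum.inl (a, x)
  map_rel' h := by simp [plusGraph, plusRel, h, h.ne]

def copy2 (b : D.VT2) : G2 →g D.plusGraph where
  toFun y := Sum.inr (b, y)
  map_rel' h := by simp [plusGraph, plusRel, h, h.ne]

theorem reachable_of_site_eq (hc1 : G1.Connected) (hc2 : G2.Connected) {p q : D.PlusV}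
    (h : D.site p = D.site q) : D.plusGraph.Reachable p q := by
  rcases p with ⟨a, x⟩ | ⟨b, x⟩ <;> rcases q with ⟨a', y⟩ | ⟨b', y⟩ <;>
    simp only [site, Sum.inl.injEq, Sum.inr.injEq, reduceCtorEq] at h
  · subst h
    exact (hc1.preconnected x y).map (D.copy1 a)
  · subst h
    exact (hc2.preconnected x y).map (D.copy2 b)

theorem exists_plusGraph_adj_of_adj_site {s t : D.VT1 ⊕ D.VT2} (h : (bipGraph D.Tadj).Adj s t) :
    ∃ p q, D.site p = s ∧ D.site q = t ∧ D.plusGraph.Adj p q := by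
  have cross_adj : ∀ {a b}, D.Tadj a b → ∃ x y,
      D.plusGraph.Adj (Sum.inl (a, x)) (Sum.inr (b, y)) := fun {a b} hab => by
    obtain ⟨x, hx⟩ := D.S1_nonempty (D.lab1 a b hab)
    refine ⟨x, D.glue (D.lab1 a b hab) (D.lab2 a b hab) x, ?_⟩
    simp only [plusGraph, fromRel_adj]
    exact ⟨by simp, .inl ⟨hab, hx, rfl⟩⟩
  rcases s with a | b <;> rcases t with a' | b' <;>
    simp only [bipGraph, fromRel_adj, ne_eq, Sum.inl.injEq, Sum.inr.injEq, reduceCtorEq,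
      not_false_eq_true, or_self, or_false, false_or, and_false, true_and] at h
  · obtain ⟨x, y, hxy⟩ := cross_adj h
    exact ⟨_, _, rfl, rfl, hxy⟩
  · obtain ⟨x, y, hxy⟩ := cross_adj h
    exact ⟨_, _, rfl, rfl, hxy.symm⟩

theorem plusGraph_connected (hc1 : G1.Connected) (hc2 : G2.Connected) :
    D.plusGraph.Connected := by
  have : Nonempty D.PlusV := by
    obtain ⟨a | b⟩ := D.isTree.connected.nonempty
    · exact ⟨Sum.inl (a, hc1.nonempty.some)⟩
    · exact ⟨Sum.inr (b, hc2.nonempty.some)⟩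
  exact ⟨D.isTree.connected.preconnected.of_reachable_fibers (f := D.site)
    (fun _ _ => D.exists_plusGraph_adj_of_adj_site) (fun _ _ => D.reachable_of_site_eq hc1 hc2)⟩

def idGraph : SimpleGraph D.PlusV := SimpleGraph.fromRel D.idRel

theorem idGraph_le_plusGraph : D.idGraph ≤ D.plusGraph := by
  intro x y h
  simp only [idGraph, plusGraph, fromRel_adj] at h ⊢
  refine ⟨h.1, h.2.imp ?_ ?_⟩ <;> rintro ⟨p, q, rfl, rfl, hpq⟩ <;> exact hpq

def siteHom : D.idGraph →g bipGraph D.Tadj where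
  toFun := D.site
  map_rel' {x y} h := by
    simp only [idGraph, fromRel_adj] at h
    rcases h with ⟨-, ⟨p, q, rfl, rfl, hpq⟩ | ⟨p, q, rfl, rfl, hpq⟩⟩ <;>
      simp [bipGraph, site, hpq.1]

theorem cross_right_unique {p : D.VT1 × V1} {q q' : D.VT2 × V2} (h : D.cross p q)
    (h' : D.cross p q') (hq : q.1 = q'.1) : q = q' := by
  obtain ⟨b, y⟩ := q
  obtain ⟨b', y'⟩ := q'
  obtain rfl : b = b' := hq
  exact Prod.ext rfl (h.2.2.trans h'.2.2.symm)

theorem cross_left_unique {p p' : D.VT1 × V1} {q : D.VT2 × V2} (h : D.cross p q)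
    (h' : D.cross p' q) (hp : p.1 = p'.1) : p = p' := by
  obtain ⟨a, x⟩ := p
  obtain ⟨a', x'⟩ := p'
  obtain rfl : a = a' := hp
  exact Prod.ext rfl ((D.glue_bij _ _).injOn h.2.1 h'.2.1 (h.2.2.symm.trans h'.2.2))

theorem eq_of_idGraph_adj_of_site_eq {a b c : D.PlusV} (hab : D.idGraph.Adj a b)
    (hbc : D.idGraph.Adj b c) (h : D.site a = D.site c) : a = c := by
  simp only [idGraph, fromRel_adj, idRel] at hab hbc
  rcases hab with ⟨-, ⟨p, q, rfl, rfl, hpq⟩ | ⟨p, q, rfl, rfl, hpq⟩⟩ <;>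
    rcases hbc with ⟨-, ⟨p', q', hb, rfl, hpq'⟩ | ⟨p', q', rfl, hb, hpq'⟩⟩ <;>
    simp only [reduceCtorEq, Sum.inl.injEq, Sum.inr.injEq, site] at hb h
  · subst hb
    rw [D.cross_left_unique hpq hpq' h]
  · subst hb
    rw [D.cross_right_unique hpq hpq' h]

theorem toAmalg_eq_iff_reachable {x y : D.PlusV} :
    D.toAmalg x = D.toAmalg y ↔ D.idGraph.Reachable x y := by
  constructor
  · rw [toAmalg, Quot.eq]
    intro h
    induction h with
    | rel x y hxy =>
      obtain ⟨p, q, rfl, rfl, hpq⟩ := hxy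
      exact Adj.reachable ⟨by simp, .inl ⟨p, q, rfl, rfl, hpq⟩⟩
    | refl => rfl
    | symm _ _ _ ih => exact ih.symm
    | trans _ _ _ _ _ ih1 ih2 => exact ih1.trans ih2
  · rintro ⟨w⟩
    induction w with
    | nil => rfl
    | cons h _ ih =>
      rw [← ih]
      rcases h.2 with h | h
      · exact Quot.sound h
      · exact (Quot.sound h).symm

theorem dist_lt_ncard_support_of_toAmalg_eq {u v : D.PlusV} (h : D.toAmalg u = D.toAmalg v)
    (hfin : (D.support (D.toAmalg u)).Finite) :
    D.plusGraph.dist u v < (D.support (D.toAmalg u)).ncard := by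
  classical
  obtain ⟨p, hp⟩ := (D.toAmalg_eq_iff_reachable.mp h).exists_isPath
  have hsites : (p.support.map D.site).Nodup := by
    simpa [Walk.support_map, siteHom] using
      (hp.map_of_isAcyclic D.siteHom D.isTree.isAcyclic D.eq_of_idGraph_adj_of_site_eq).support_nodup
  have hmem : ∀ t ∈ p.support.map D.site, t ∈ D.support (D.toAmalg u) := by
    simp only [List.mem_map]
    rintro _ ⟨w, hw, rfl⟩
    exact ⟨w, (D.toAmalg_eq_iff_reachable.mpr ⟨p.takeUntil w hw⟩).symm, rfl⟩
  calc D.plusGraph.dist u v ≤ (p.mapLe D.idGraph_le_plusGraph).length := dist_le _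
    _ < (p.support.map D.site).length := by simp
    _ ≤ _ := hsites.length_le_ncard hmem hfin

theorem toAmalg_surjective : Function.Surjective D.toAmalg := Quot.mk_surjective

theorem toAmalg_eq_or_adj {a b : D.PlusV} (h : D.plusGraph.Adj a b) :
    D.toAmalg a = D.toAmalg b ∨ D.amalgGraph.Adj (D.toAmalg a) (D.toAmalg b) := by
  rw [or_iff_not_imp_left]
  exact fun hne => ⟨hne, .inl ⟨a, b, rfl, rfl, h⟩⟩

theorem exists_plusGraph_adj_of_amalgGraph_adj {x y : D.AmalgV} (h : D.amalgGraph.Adj x y) :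
    ∃ a b, D.toAmalg a = x ∧ D.toAmalg b = y ∧ D.plusGraph.Adj a b := by
  rcases h.2 with ⟨a, b, rfl, rfl, hab⟩ | ⟨a, b, rfl, rfl, hab⟩
  · exact ⟨a, b, rfl, rfl, hab⟩
  · exact ⟨b, a, rfl, rfl, hab.symm⟩

end TreeAmalgData

/-- **Remark.** For every bound `N` on the identification sizes there are constants `γ`, `c`
(depending only on `N`) such that for every tree amalgamation `G1 ∗_T G2` of connected
graphs all of whose vertices have identification size at most `N`, the canonical contraction
map `ψ : V(G1 + G2) → V(G1 ∗_T G2)` is a `(γ, c)`-quasi-isometry. -/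
theorem contraction_quasiIsometry (N : ℕ) :
    ∃ γ c : ℝ, 1 ≤ γ ∧ 0 ≤ c ∧
      ∀ {V1 V2 : Type u} (G1 : SimpleGraph V1) (G2 : SimpleGraph V2),
        G1.Connected → G2.Connected →
        ∀ D : TreeAmalgData G1 G2,
          (∀ x : D.AmalgV, (D.support x).Finite ∧ (D.support x).ncard ≤ N) →
          IsQIWith D.plusGraph D.amalgGraph γ c D.toAmalg := by
  refine ⟨N + 1, N, by simp, N.cast_nonneg, ?_⟩
  intro V1 V2 G1 G2 hc1 hc2 D hN
  exact (D.plusGraph_connected hc1 hc2).isQIWith_of_contraction N D.toAmalg_surjective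
    (fun _ _ => D.toAmalg_eq_or_adj) (fun _ _ => D.exists_plusGraph_adj_of_amalgGraph_adj)
    fun _ _ h => ((D.dist_lt_ncard_support_of_toAmalg_eq h (hN _).1).trans_le (hN _).2).le
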